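/- Let U ~ N(μ, σ²) and V = min(U, 2μ - U). Then the moment generating function of V is M_V(t) = E[e^{tV}] = 2·e^{μt + σ²t²/2}·Φ(-σt), where Φ is the standard normal CDF. -/

import Mathlib

open MeasureTheory ProbabilityTheory Set Real

/-!
Writing `U = μ + σ Z` with `Z` standard normal, `min U (2μ - U) = μ - σ |Z|`, so it suffices to
compute `E[exp (-a |Z|)] = 2 ∫_{z > 0} φ(z) e^{-a z} dz`. Completing the square,
`φ(z) e^{-a z} = e^{a²/2} φ(z + a)`, and the remaining integral is `P(Z > a) = Φ(-a)`.
-/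

theorem min_neg_eq_neg_abs {α : Type*} [AddCommGroup α] [LinearOrder α] [IsOrderedAddMonoid α]
    (a : α) : min a (-a) = -|a| := by
  rw [abs_eq_max_neg, max_comm, ← min_neg_neg, neg_neg]

theorem integral_comp_add_right_Ioi {E : Type*} [NormedAddCommGroup E] [NormedSpace ℝ E]
    (f : ℝ → E) (a c : ℝ) : ∫ x in Ioi a, f (x + c) = ∫ x in Ioi (a + c), f x := by
  have := (measurableEmbedding_addRight c).setIntegral_map (μ := volume) f (Ioi (a + c))
  rw [map_add_right_eq_self] at this
  simp [this]

theorem integral_gaussianReal_eq_integral_comp_affine {E : Type*} [NormedAddCommGroup E]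
    [NormedSpace ℝ E] (f : ℝ → E) (μ : ℝ) {σ : ℝ} (hσ : σ ≠ 0) :
    ∫ x, f x ∂gaussianReal μ ⟨σ ^ 2, sq_nonneg σ⟩ = ∫ z, f (σ * z + μ) ∂gaussianReal 0 1 := by
  have h : gaussianReal μ ⟨σ ^ 2, sq_nonneg σ⟩ =
      ((gaussianReal 0 1).map (σ * ·)).map (· + μ) := by
    rw [gaussianReal_map_const_mul, gaussianReal_map_add_const, mul_zero, zero_add, mul_one]
    rfl
  rw [h, (measurableEmbedding_addRight μ).integral_map,
    (measurableEmbedding_mulLeft₀ hσ).integral_map]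

lemma gaussianPDFReal_zero_one (x : ℝ) :
    gaussianPDFReal 0 1 x = (√(2 * π))⁻¹ * exp (-x ^ 2 / 2) := by
  simp [gaussianPDFReal]

theorem integral_exp_neg_mul_abs_gaussianReal (a : ℝ) :
    ∫ z, exp (-a * |z|) ∂gaussianReal 0 1 =
      2 * exp (a ^ 2 / 2) * ((1 / √(2 * π)) * ∫ x in Iic (-a), exp (-x ^ 2 / 2)) := by
  have hsquare : ∀ z, exp (-z ^ 2 / 2) * exp (-a * z) = exp (a ^ 2 / 2) * exp (-(z + a) ^ 2 / 2) :=
    fun z ↦ by rw [← exp_add, ← exp_add]; ring_nf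
  calc ∫ z, exp (-a * |z|) ∂gaussianReal 0 1
      = ∫ z, (√(2 * π))⁻¹ * (exp (-|z| ^ 2 / 2) * exp (-a * |z|)) := by
        simp_rw [integral_gaussianReal_eq_integral_smul one_ne_zero, gaussianPDFReal_zero_one,
          sq_abs, smul_eq_mul, mul_assoc]
    _ = 2 * ∫ z in Ioi 0, (√(2 * π))⁻¹ * (exp (-z ^ 2 / 2) * exp (-a * z)) :=
        integral_comp_abs (f := fun z ↦ (√(2 * π))⁻¹ * (exp (-z ^ 2 / 2) * exp (-a * z)))
    _ = 2 * exp (a ^ 2 / 2) * ((1 / √(2 * π)) * ∫ z in Ioi 0, exp (-(z + a) ^ 2 / 2)) := by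
        simp_rw [hsquare, integral_const_mul]
        ring
    _ = 2 * exp (a ^ 2 / 2) * ((1 / √(2 * π)) * ∫ x in Iic (-a), exp (-x ^ 2 / 2)) := by
        rw [integral_comp_add_right_Ioi (fun x ↦ exp (-x ^ 2 / 2)), zero_add,
          ← integral_comp_neg_Ioi]
        simp_rw [neg_sq]

theorem stmt_3 (μ σ t : ℝ) (hσ : 0 < σ) :
    ∫ x, Real.exp (t * min x (2 * μ - x)) ∂(gaussianReal μ ⟨σ ^ 2, sq_nonneg σ⟩) =
      2 * Real.exp (μ * t + σ ^ 2 * t ^ 2 / 2) *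
        ((1 / Real.sqrt (2 * Real.pi)) * ∫ x in Set.Iic (-σ * t), Real.exp (-x ^ 2 / 2)) := by
  have hmin : ∀ z, t * min (σ * z + μ) (2 * μ - (σ * z + μ)) = μ * t + -(σ * t) * |z| := by
    intro z
    rw [show 2 * μ - (σ * z + μ) = -(σ * z) + μ by ring, min_add_add_right, min_neg_eq_neg_abs,
      abs_mul, abs_of_pos hσ]
    ring
  rw [integral_gaussianReal_eq_integral_comp_affine _ μ hσ.ne']
  simp_rw [hmin, exp_add, integral_const_mul, integral_exp_neg_mul_abs_gaussianReal, neg_mul]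
  rw [mul_pow]
  ring
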